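/- arXiv:1406.6156 — 6 statements merged into one kernel-verified Lean document; each statement's English description precedes it below -/
import Mathlib

section
/- In a unital Banach *-algebra with continuous involution, every positive linear functional f satisfies f(b*a*ab) ≤ r(a*a)·f(b*b) for all a, b, where r denotes the spectral radius. -/
/-!
For a positive functional `g` and self-adjoint `h`, positivity of `g` on `(h - t)²` for real `t`
gives the Cauchy–Schwarz inequality `g(h)² ≤ g(1) g(h²)`, and positivity on `1 - h/t = s⋆s`,
with `s` the binomial series of `√(1 - h/t)`, gives `g(h) ≤ ‖h‖ g(1)`. Iterating Cauchy–Schwarz,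
`(g(h)/g(1))^(2ⁿ) ≤ g(h^(2ⁿ))/g(1) ≤ ‖h^(2ⁿ)‖`, so Gelfand's formula bounds `g(h)/g(1)` by the
spectral radius of `h`. The theorem is the case `g = f(b⋆ · b)`, `h = a⋆a`.
-/

open scoped ComplexOrder Topology
open Filter Finset FormalMultilinearSeries

section BinomialSeries

variable {𝔸 : Type*} [NormedRing 𝔸] [NormedAlgebra ℝ 𝔸]

theorem binomialSeries_sum_eq (a : ℝ) (y : 𝔸) :
    (binomialSeries 𝔸 a).sum y = ∑' n, Ring.choose a n • y ^ n :=
  ofScalars_sum_eq _ y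

theorem summable_norm_choose_smul_pow (a : ℝ) {y : 𝔸} (hy : ‖y‖ < 1) :
    Summable fun n ↦ ‖Ring.choose a n • y ^ n‖ := by
  have hr : ((‖y‖₊ : NNReal) : ENNReal) < (binomialSeries ℝ a).radius :=
    (by exact_mod_cast hy : (‖y‖₊ : ENNReal) < 1).trans_le binomialSeries_radius_ge_one
  refine .of_norm_bounded_eventually_nat ((binomialSeries ℝ a).summable_norm_mul_pow hr) ?_
  filter_upwards [eventually_ne_atTop 0] with n hn
  rw [norm_norm, binomialSeries, ofScalars_norm, coe_nnnorm]
  calc ‖Ring.choose a n • y ^ n‖ ≤ ‖Ring.choose a n‖ * ‖y ^ n‖ := norm_smul_le _ _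
    _ ≤ ‖Ring.choose a n‖ * ‖y‖ ^ n := by
      gcongr; exact norm_pow_le' y (Nat.pos_of_ne_zero hn)

theorem binomialSeries_sum_mul [CompleteSpace 𝔸] (a b : ℝ) {y : 𝔸} (hy : ‖y‖ < 1) :
    (binomialSeries 𝔸 a).sum y * (binomialSeries 𝔸 b).sum y =
      (binomialSeries 𝔸 (a + b)).sum y := by
  simp only [binomialSeries_sum_eq]
  rw [tsum_mul_tsum_eq_tsum_sum_antidiagonal_of_summable_norm
    (summable_norm_choose_smul_pow a hy) (summable_norm_choose_smul_pow b hy)]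
  refine tsum_congr fun n ↦ ?_
  rw [Ring.add_choose_eq n (Commute.all a b), sum_smul]
  refine sum_congr rfl fun ij hij ↦ ?_
  rw [smul_mul_smul_comm, ← pow_add, mem_antidiagonal.1 hij]

theorem binomialSeries_one_sum (y : 𝔸) : (binomialSeries 𝔸 (1 : ℝ)).sum y = 1 + y := by
  have hchoose : ∀ n, Ring.choose (1 : ℝ) n = (Nat.choose 1 n : ℝ) := fun n ↦ by
    rw [← Ring.choose_natCast, Nat.cast_one]
  rw [binomialSeries_sum_eq, tsum_eq_sum (s := range 2) fun n hn ↦ by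
    rw [hchoose, Nat.choose_eq_zero_of_lt (by simpa using hn), Nat.cast_zero, zero_smul]]
  simp [sum_range_succ, hchoose]

variable [StarRing 𝔸] [ContinuousStar 𝔸] [StarModule ℝ 𝔸]

theorem star_binomialSeries_sum (a : ℝ) (y : 𝔸) :
    star ((binomialSeries 𝔸 a).sum y) = (binomialSeries 𝔸 a).sum (star y) := by
  simp only [binomialSeries_sum_eq, tsum_star, star_smul, star_pow, star_trivial]

theorem exists_star_mul_self_eq_one_sub [CompleteSpace 𝔸] {x : 𝔸} (hx : IsSelfAdjoint x)
    (hx1 : ‖x‖ < 1) : ∃ s : 𝔸, star s * s = 1 - x := by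
  refine ⟨(binomialSeries 𝔸 (1 / 2 : ℝ)).sum (-x), ?_⟩
  rw [star_binomialSeries_sum, star_neg, hx.star_eq,
    binomialSeries_sum_mul _ _ (by rwa [norm_neg]), add_halves, binomialSeries_one_sum,
    sub_eq_add_neg]

end BinomialSeries

section PositiveFunctional

variable {A : Type*} [Ring A] [StarRing A] [Algebra ℂ A]
  {f : A →ₗ[ℂ] ℂ} (hf : ∀ a : A, 0 ≤ f (star a * a))
include hf

theorem re_apply_one_nonneg : 0 ≤ (f 1).re := by
  simpa using (Complex.nonneg_iff.1 (hf 1)).1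

theorem re_apply_sq_le [StarModule ℂ A] {h : A} (hh : IsSelfAdjoint h) :
    (f h).re ^ 2 ≤ (f 1).re * (f (h ^ 2)).re := by
  have hquad : ∀ t : ℝ, 0 ≤ (f 1).re * (t * t) + (-2 * (f h).re) * t + (f (h ^ 2)).re := by
    intro t
    have hy : star (h - (t : ℂ) • 1) * (h - (t : ℂ) • 1) =
        h ^ 2 - ((2 * t : ℝ) : ℂ) • h + ((t * t : ℝ) : ℂ) • 1 := by
      rw [star_sub, hh.star_eq, star_smul, star_one, Complex.star_def, Complex.conj_ofReal]
      simp only [sq, sub_mul, mul_sub, smul_mul_assoc, mul_smul_comm, one_mul, mul_one]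
      push_cast
      module
    have := (Complex.nonneg_iff.1 (hf (h - (t : ℂ) • 1))).1
    rw [hy] at this
    simp only [map_add, map_sub, map_smul, smul_eq_mul, Complex.add_re, Complex.sub_re,
      Complex.re_ofReal_mul] at this
    linarith
  have := discrim_le_zero hquad
  rw [discrim] at this
  nlinarith

theorem re_apply_pow_two_pow_mul_le [StarModule ℂ A] (n : ℕ) {h : A} (hh : IsSelfAdjoint h) :
    (f h).re ^ 2 ^ n * (f 1).re ≤ (f 1).re ^ 2 ^ n * (f (h ^ 2 ^ n)).re := by
  induction n generalizing h with
  | zero => simp [mul_comm]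
  | succ n ih =>
    have hG := re_apply_one_nonneg hf
    calc (f h).re ^ 2 ^ (n + 1) * (f 1).re = ((f h).re ^ 2) ^ 2 ^ n * (f 1).re := by
          rw [pow_succ', pow_mul]
      _ ≤ ((f 1).re * (f (h ^ 2)).re) ^ 2 ^ n * (f 1).re := by
          gcongr; exact re_apply_sq_le hf hh
      _ = (f 1).re ^ 2 ^ n * ((f (h ^ 2)).re ^ 2 ^ n * (f 1).re) := by ring
      _ ≤ (f 1).re ^ 2 ^ n * ((f 1).re ^ 2 ^ n * (f ((h ^ 2) ^ 2 ^ n)).re) :=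
          mul_le_mul_of_nonneg_left (ih (hh.pow 2)) (by positivity)
      _ = (f 1).re ^ 2 ^ (n + 1) * (f (h ^ 2 ^ (n + 1))).re := by
          rw [← pow_mul, ← pow_succ', pow_succ 2 n, pow_mul]; ring

end PositiveFunctional

theorem le_toReal_spectralRadius_of_frequently_pow_le {A : Type*} [NormedRing A]
    [NormedAlgebra ℂ A] [CompleteSpace A] {a : A} {c : ℝ} (hc : 0 ≤ c)
    (h : ∃ᶠ n in atTop, c ^ n ≤ ‖a ^ n‖) : c ≤ (spectralRadius ℂ a).toReal := by
  have hfin : spectralRadius ℂ a ≠ ⊤ :=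
    ne_top_of_le_ne_top (by finiteness) (spectrum.spectralRadius_le_pow_nnnorm_pow_one_div ℂ a 0)
  rw [← ENNReal.ofReal_le_iff_le_toReal hfin]
  refine ge_of_tendsto_of_frequently (spectrum.pow_norm_pow_one_div_tendsto_nhds_spectralRadius a)
    ((h.and_eventually (eventually_ne_atTop 0)).mono fun n ⟨hn, hn0⟩ ↦ ?_)
  refine ENNReal.ofReal_le_ofReal ?_
  calc c = (c ^ n) ^ (1 / n : ℝ) := by rw [one_div, Real.pow_rpow_inv_natCast hc hn0]
    _ ≤ ‖a ^ n‖ ^ (1 / n : ℝ) := by gcongr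

section BanachStarAlgebra

variable {A : Type*} [NormedRing A] [NormedAlgebra ℂ A] [CompleteSpace A] [StarRing A]
  [ContinuousStar A] [StarModule ℂ A] {f : A →ₗ[ℂ] ℂ} (hf : ∀ a : A, 0 ≤ f (star a * a))
include hf

theorem re_apply_le_mul_re_apply_one_of_norm_lt {h : A} (hh : IsSelfAdjoint h) {t : ℝ}
    (ht : ‖h‖ < t) : (f h).re ≤ t * (f 1).re := by
  have ht0 : 0 < t := (norm_nonneg h).trans_lt ht
  have hx : IsSelfAdjoint (((t⁻¹ : ℝ) : ℂ) • h) :=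
    IsSelfAdjoint.smul (Complex.conj_ofReal _) hh
  have hx1 : ‖((t⁻¹ : ℝ) : ℂ) • h‖ < 1 := by
    rwa [norm_smul, Complex.norm_real, Real.norm_of_nonneg (inv_nonneg.2 ht0.le),
      inv_mul_lt_one₀ ht0]
  obtain ⟨s, hs⟩ := exists_star_mul_self_eq_one_sub hx hx1
  have := (Complex.nonneg_iff.1 (hf s)).1
  rw [hs, map_sub, map_smul, smul_eq_mul, Complex.sub_re, Complex.re_ofReal_mul, sub_nonneg] at this
  exact (inv_mul_le_iff₀ ht0).1 this

theorem re_apply_le_norm_mul_re_apply_one {h : A} (hh : IsSelfAdjoint h) :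
    (f h).re ≤ ‖h‖ * (f 1).re :=
  ge_of_tendsto (x := 𝓝[>] ‖h‖)
    (((continuous_mul_const _).tendsto _).mono_left nhdsWithin_le_nhds)
    (eventually_nhdsWithin_of_forall fun _ ht ↦ re_apply_le_mul_re_apply_one_of_norm_lt hf hh ht)

theorem re_apply_le_spectralRadius_mul_re_apply_one {h : A} (hh : IsSelfAdjoint h) :
    (f h).re ≤ (spectralRadius ℂ h).toReal * (f 1).re := by
  have hG := re_apply_one_nonneg hf
  rcases le_or_gt (f h).re 0 with hr | hr
  · exact hr.trans (by positivity)
  obtain hG0 | hGpos := hG.eq_or_lt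
  · have := re_apply_sq_le hf hh
    rw [← hG0, zero_mul] at this
    nlinarith
  rw [← div_le_iff₀ hGpos]
  refine le_toReal_spectralRadius_of_frequently_pow_le (by positivity) ?_
  refine frequently_atTop.2 fun N ↦ ⟨2 ^ N, N.lt_two_pow_self.le, ?_⟩
  have hCS := re_apply_pow_two_pow_mul_le hf N hh
  have hnorm := re_apply_le_norm_mul_re_apply_one hf (hh.pow (2 ^ N))
  rw [div_pow, div_le_iff₀ (by positivity)]
  refine le_of_mul_le_mul_right (hCS.trans ?_) hGpos
  calc (f 1).re ^ 2 ^ N * (f (h ^ 2 ^ N)).re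
      ≤ (f 1).re ^ 2 ^ N * (‖h ^ 2 ^ N‖ * (f 1).re) := by gcongr
    _ = ‖h ^ 2 ^ N‖ * (f 1).re ^ 2 ^ N * (f 1).re := by ring

end BanachStarAlgebra

/-- In a unital Banach `*`-algebra with continuous involution, every positive linear
functional `f` satisfies `f (b⋆ a⋆ a b) ≤ r (a⋆ a) · f (b⋆ b)`, where `r` denotes the
spectral radius. -/
theorem positive_functional_spectralRadius_bound
    {A : Type*} [NormedRing A] [NormedAlgebra ℂ A] [CompleteSpace A]
    [StarRing A] [ContinuousStar A] [StarModule ℂ A]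
    (f : A →ₗ[ℂ] ℂ) (hf : ∀ a : A, 0 ≤ f (star a * a)) :
    ∀ a b : A, (f (star b * (star a * a) * b)).re ≤
      (spectralRadius ℂ (star a * a)).toReal * (f (star b * b)).re := by
  intro a b
  set g : A →ₗ[ℂ] ℂ := f ∘ₗ LinearMap.mulLeftRight ℂ (star b, b)
  have hg : ∀ y : A, 0 ≤ g (star y * y) := fun y ↦ by simpa [g, mul_assoc] using hf (y * b)
  simpa [g] using re_apply_le_spectralRadius_mul_re_apply_one hg (.star_mul_self a)
end

section
/- Let f, g be representable positive functionals on a *-algebra A with GNS data (H_A, π_A, ζ_A) and (H_B, π_B, ζ_B), and let M = {ζ ∈ H_B : ∃ sequence (a_n) in A with f(a_n* a_n) → 0 and π_B(a_n)ζ_B → ζ in H_B}. Then M is a closed π_B-invariant subspace of H_B, and its orthogonal complement M^⊥ is also π_B-invariant. -/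
open scoped ComplexOrder InnerProductSpace
open Filter Topology

set_option linter.unusedSectionVars false

/-- A linear functional on a `*`-algebra is *representable* if it is positive,
satisfies `|f a|² ≤ C · f (a⋆ a)` for some `C ≥ 0`, and satisfies the boundedness
condition `f (b⋆ x⋆ x b) ≤ λ_x · f (b⋆ b)` for every `x`. -/
def IsRepresentable {A : Type*} [Ring A] [StarRing A] [Algebra ℂ A] [StarModule ℂ A]
    (f : A →ₗ[ℂ] ℂ) : Prop :=
  (∀ a : A, 0 ≤ f (star a * a)) ∧
  (∃ C : ℝ, 0 ≤ C ∧ ∀ a : A, ‖f a‖ ^ 2 ≤ C * (f (star a * a)).re) ∧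
  (∀ x : A, ∃ lam : ℝ, 0 ≤ lam ∧
    ∀ b : A, (f (star (x * b) * (x * b))).re ≤ lam * (f (star b * b)).re)

/-- The subspace `M = {ζ ∈ H_B | ∃ (aₙ), f (aₙ⋆ aₙ) → 0 and B aₙ = π_B aₙ ζ_B → ζ}`. -/
def lebSet {A : Type*} [Ring A] [StarRing A] [Algebra ℂ A] [StarModule ℂ A]
    {HB : Type*} [NormedAddCommGroup HB] [InnerProductSpace ℂ HB] [CompleteSpace HB]
    (f : A →ₗ[ℂ] ℂ) (πB : A →ₗ[ℂ] (HB →L[ℂ] HB)) (ζB : HB) : Set HB :=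
  {ζ : HB | ∃ a : ℕ → A,
    Tendsto (fun n => f (star (a n) * a n)) atTop (nhds 0) ∧
    Tendsto (fun n => πB (a n) ζB) atTop (nhds ζ)}

variable {A : Type*} [Ring A] [StarRing A] [Algebra ℂ A] [StarModule ℂ A]
variable {HB : Type*} [NormedAddCommGroup HB] [InnerProductSpace ℂ HB] [CompleteSpace HB]

/-! `lebSet f πB ζB` is the set of `ζ` with `(0, ζ)` in the closure of
`{(f (a⋆ a), π_B a ζ_B)}`, hence closed. It is a subspace because `a ↦ f (a⋆ a)` obeys the
parallelogram law, and `π_B`-invariant because `f (b⋆ x⋆ x b) ≤ λ_x f (b⋆ b)`. Finally `Mᗮ` is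
invariant because `π_B (star x)` is the adjoint of `π_B x`. -/

lemma Complex.norm_eq_re_of_nonneg {z : ℂ} (hz : 0 ≤ z) : ‖z‖ = z.re := by
  simpa using congrArg Complex.re (Complex.norm_of_nonneg' hz)

lemma norm_map_star_add_mul_add_le {f : A →ₗ[ℂ] ℂ} (hpos : ∀ a : A, 0 ≤ f (star a * a))
    (x y : A) :
    ‖f (star (x + y) * (x + y))‖ ≤ 2 * ‖f (star x * x)‖ + 2 * ‖f (star y * y)‖ := by
  have parallelogram : star (x + y) * (x + y) + star (x - y) * (x - y)
      = (star x * x + star x * x) + (star y * y + star y * y) := by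
    simp only [star_add, star_sub]; noncomm_ring
  have hre := congrArg (fun a => (f a).re) parallelogram
  simp only [map_add, Complex.add_re] at hre
  simp only [Complex.norm_eq_re_of_nonneg (hpos _)]
  linarith [(Complex.nonneg_iff.mp (hpos (x - y))).1]

lemma Submodule.apply_mem_orthogonal_of_adjoint {𝕜 E : Type*} [RCLike 𝕜]
    [NormedAddCommGroup E] [InnerProductSpace 𝕜 E] {K : Submodule 𝕜 E} {T S : E → E}
    (hadj : ∀ u v, ⟪u, T v⟫_𝕜 = ⟪S u, v⟫_𝕜) (hS : ∀ u ∈ K, S u ∈ K) {v : E} (hv : v ∈ Kᗮ) :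
    T v ∈ Kᗮ := by
  rw [Submodule.mem_orthogonal] at hv ⊢
  intro u hu
  rw [hadj]
  exact hv _ (hS u hu)

section lebSet

variable {f : A →ₗ[ℂ] ℂ} {πB : A →ₗ[ℂ] (HB →L[ℂ] HB)} {ζB : HB}

lemma lebSet_eq_preimage_closure :
    lebSet f πB ζB = (fun ζ => ((0 : ℂ), ζ)) ⁻¹'
      closure (Set.range fun a : A => (f (star a * a), πB a ζB)) := by
  ext ζ
  simp only [lebSet, Set.mem_ofPred_eq, Set.mem_preimage, mem_closure_iff_seq_limit,
    Set.mem_range]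
  constructor
  · rintro ⟨a, hf, hπ⟩
    exact ⟨_, fun n => ⟨a n, rfl⟩, hf.prodMk_nhds hπ⟩
  · rintro ⟨p, hp, hlim⟩
    choose a ha using hp
    obtain rfl := funext ha
    exact ⟨a, hlim.fst_nhds, hlim.snd_nhds⟩

lemma isClosed_lebSet : IsClosed (lebSet f πB ζB) := by
  rw [lebSet_eq_preimage_closure]
  exact isClosed_closure.preimage (by fun_prop)

lemma zero_mem_lebSet : (0 : HB) ∈ lebSet f πB ζB :=
  ⟨0, by simp, by simp⟩

lemma add_mem_lebSet (hpos : ∀ a : A, 0 ≤ f (star a * a)) {ζ η : HB}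
    (hζ : ζ ∈ lebSet f πB ζB) (hη : η ∈ lebSet f πB ζB) : ζ + η ∈ lebSet f πB ζB := by
  obtain ⟨a, ha, haζ⟩ := hζ
  obtain ⟨b, hb, hbη⟩ := hη
  refine ⟨a + b, ?_, by simpa using haζ.add hbη⟩
  rw [tendsto_zero_iff_norm_tendsto_zero]
  refine squeeze_zero (fun _ => norm_nonneg _)
    (fun n => norm_map_star_add_mul_add_le hpos (a n) (b n)) ?_
  simpa using (ha.norm.const_mul 2).add (hb.norm.const_mul 2)

lemma smul_mem_lebSet (c : ℂ) {ζ : HB} (hζ : ζ ∈ lebSet f πB ζB) :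
    c • ζ ∈ lebSet f πB ζB := by
  obtain ⟨a, ha, haζ⟩ := hζ
  refine ⟨fun n => c • a n, ?_, by simpa using haζ.const_smul c⟩
  have hscale : ∀ n, f (star (c • a n) * (c • a n)) = (star c * c) * f (star (a n) * a n) := by
    intro n
    rw [star_smul, smul_mul_assoc, mul_smul_comm, smul_smul, map_smul, smul_eq_mul]
  simp only [hscale]
  simpa using ha.const_mul (star c * c)

lemma apply_mem_lebSet (hpos : ∀ a : A, 0 ≤ f (star a * a)) {x : A}
    (hbdd : ∃ lam : ℝ, ∀ b : A, (f (star (x * b) * (x * b))).re ≤ lam * (f (star b * b)).re)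
    (hmul : ∀ y : A, πB (x * y) = (πB x).comp (πB y)) {ζ : HB}
    (hζ : ζ ∈ lebSet f πB ζB) : πB x ζ ∈ lebSet f πB ζB := by
  obtain ⟨lam, hlam⟩ := hbdd
  obtain ⟨a, ha, haζ⟩ := hζ
  refine ⟨fun n => x * a n, ?_, ?_⟩
  · rw [tendsto_zero_iff_norm_tendsto_zero]
    refine squeeze_zero (fun _ => norm_nonneg _) (fun n => ?_)
      (by simpa using ha.norm.const_mul lam)
    simpa only [Complex.norm_eq_re_of_nonneg (hpos _)] using hlam (a n)
  · simpa [hmul, Function.comp_def] using ((πB x).continuous.tendsto ζ).comp haζ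

variable (f πB ζB) in
def lebSubmodule (hpos : ∀ a : A, 0 ≤ f (star a * a)) : Submodule ℂ HB where
  carrier := lebSet f πB ζB
  zero_mem' := zero_mem_lebSet
  add_mem' := add_mem_lebSet hpos
  smul_mem' := smul_mem_lebSet

end lebSet

theorem lebSet_closed_invariant_submodule_general
    (f : A →ₗ[ℂ] ℂ) (hf : IsRepresentable f)
    (πB : A →ₗ[ℂ] (HB →L[ℂ] HB)) (ζB : HB)
    (hmul : ∀ x y : A, πB (x * y) = (πB x).comp (πB y))
    (hstar : ∀ (x : A) (u v : HB), ⟪u, πB x v⟫_ℂ = ⟪πB (star x) u, v⟫_ℂ) :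
    ∃ M : Submodule ℂ HB,
      ((M : Set HB) = lebSet f πB ζB) ∧
      IsClosed (M : Set HB) ∧
      (∀ a : A, ∀ ζ ∈ M, πB a ζ ∈ M) ∧
      (∀ a : A, ∀ ζ ∈ Mᗮ, πB a ζ ∈ Mᗮ) := by
  obtain ⟨hpos, -, hbdd⟩ := hf
  have hinv (x : A) : ∀ ζ ∈ lebSubmodule f πB ζB hpos, πB x ζ ∈ lebSubmodule f πB ζB hpos :=
    fun _ => apply_mem_lebSet hpos (by obtain ⟨lam, -, h⟩ := hbdd x; exact ⟨lam, h⟩) (hmul x)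
  exact ⟨lebSubmodule f πB ζB hpos, rfl, isClosed_lebSet, hinv,
    fun x _ => Submodule.apply_mem_orthogonal_of_adjoint (hstar x) (hinv (star x))⟩

/-- Let `f, g` be representable positive functionals on a `*`-algebra `A`, with `(H_B, π_B, ζ_B)`
the GNS triple of `g`. The set `M = {ζ | ∃ (aₙ), f (aₙ⋆ aₙ) → 0, π_B aₙ ζ_B → ζ}` is a closed
`π_B`-invariant linear subspace of `H_B`, and `Mᗮ` is also `π_B`-invariant. -/
theorem lebSet_closed_invariant_submodule
    (f g : A →ₗ[ℂ] ℂ) (hf : IsRepresentable f) (hg : IsRepresentable g)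
    (πB : A →ₗ[ℂ] (HB →L[ℂ] HB)) (ζB : HB)
    (hmul : ∀ x y : A, πB (x * y) = (πB x).comp (πB y))
    (hstar : ∀ (x : A) (u v : HB), ⟪u, πB x v⟫_ℂ = ⟪πB (star x) u, v⟫_ℂ)
    (hgns : ∀ a : A, g a = ⟪ζB, πB a ζB⟫_ℂ)
    (hcyc : Dense (Set.range fun a : A => πB a ζB)) :
    ∃ M : Submodule ℂ HB,
      ((M : Set HB) = lebSet f πB ζB) ∧
      IsClosed (M : Set HB) ∧
      (∀ a : A, ∀ ζ ∈ M, πB a ζ ∈ M) ∧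
      (∀ a : A, ∀ ζ ∈ Mᗮ, πB a ζ ∈ Mᗮ) :=
  lebSet_closed_invariant_submodule_general f hf πB ζB hmul hstar
end

section
/- Let g be a representable positive functional on a *-algebra A with GNS triple (H_B, π_B, ζ_B), and let M be a closed subspace of H_B invariant under π_B, with orthogonal projection P. Define g_a(a) = ⟨π_B(a)(I−P)ζ_B, (I−P)ζ_B⟩ and g_s(a) = ⟨π_B(a)Pζ_B, Pζ_B⟩. Then g_a and g_s are representable positive functionals and g = g_a + g_s. -/
open scoped ComplexOrder InnerProductSpace
open Filter Topology

set_option linter.unusedSectionVars false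

variable {A : Type*} [Ring A] [StarRing A] [Algebra ℂ A] [StarModule ℂ A]
variable {HB : Type*} [NormedAddCommGroup HB] [InnerProductSpace ℂ HB] [CompleteSpace HB]

/-!
Since `M` is `π_B`-invariant and `π_B` is a `*`-representation, `Mᗮ` is invariant too, so the
cross terms of `⟪ζ_B, π_B a ζ_B⟫` for `ζ_B = (ζ_B - P ζ_B) + P ζ_B` vanish. Each summand is a
vector functional `a ↦ ⟪ξ, π_B a ξ⟫`, which is representable: it equals `‖π_B a ξ‖²` on
`a⋆ a`, Cauchy–Schwarz gives `C = ‖ξ‖²`, and `λ_x = ‖π_B x‖²`.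
-/

section VectorFunctional

variable (πB : A →ₗ[ℂ] (HB →L[ℂ] HB))

noncomputable def vectorFunctional (ξ : HB) : A →ₗ[ℂ] ℂ where
  toFun a := ⟪ξ, πB a ξ⟫_ℂ
  map_add' a b := by simp only [map_add, add_apply, inner_add_right]
  map_smul' c a := by
    simp only [map_smul, smul_apply, inner_smul_right, RingHom.id_apply, smul_eq_mul]

theorem vectorFunctional_apply (ξ : HB) (a : A) : vectorFunctional πB ξ a = ⟪ξ, πB a ξ⟫_ℂ :=
  rfl

variable {πB}

theorem inner_apply_star_mul_self (hmul : ∀ x y : A, πB (x * y) = (πB x).comp (πB y))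
    (hstar : ∀ (x : A) (u v : HB), ⟪u, πB x v⟫_ℂ = ⟪πB (star x) u, v⟫_ℂ) (ξ : HB) (a : A) :
    ⟪ξ, πB (star a * a) ξ⟫_ℂ = ((‖πB a ξ‖ ^ 2 : ℝ) : ℂ) := by
  rw [hmul, ContinuousLinearMap.comp_apply, hstar, star_star, inner_self_eq_norm_sq_to_K]
  norm_cast

theorem isRepresentable_vectorFunctional (hmul : ∀ x y : A, πB (x * y) = (πB x).comp (πB y))
    (hstar : ∀ (x : A) (u v : HB), ⟪u, πB x v⟫_ℂ = ⟪πB (star x) u, v⟫_ℂ) (ξ : HB) :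
    IsRepresentable (vectorFunctional πB ξ) := by
  have hsq := inner_apply_star_mul_self hmul hstar ξ
  simp only [IsRepresentable, vectorFunctional_apply, hsq, Complex.ofReal_re,
    Complex.zero_le_real]
  refine ⟨fun a => by positivity, ⟨‖ξ‖ ^ 2, by positivity, fun a => ?_⟩,
    fun x => ⟨‖πB x‖ ^ 2, by positivity, fun b => ?_⟩⟩
  · rw [← mul_pow]
    gcongr
    exact norm_inner_le_norm ξ (πB a ξ)
  · rw [hmul, ContinuousLinearMap.comp_apply, ← mul_pow]
    gcongr
    exact (πB x).le_opNorm _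

theorem inner_apply_eq_zero_of_mem_orthogonal {M : Submodule ℂ HB}
    (hinv : ∀ a : A, ∀ ζ ∈ M, πB a ζ ∈ M) {u v : HB} (hu : u ∈ Mᗮ) (hv : v ∈ M) (a : A) :
    ⟪u, πB a v⟫_ℂ = 0 :=
  Submodule.inner_left_of_mem_orthogonal (hinv a v hv) hu

theorem inner_apply_add_of_mem_orthogonal
    (hstar : ∀ (x : A) (u v : HB), ⟪u, πB x v⟫_ℂ = ⟪πB (star x) u, v⟫_ℂ) {M : Submodule ℂ HB}
    (hinv : ∀ a : A, ∀ ζ ∈ M, πB a ζ ∈ M) {u v : HB} (hu : u ∈ Mᗮ) (hv : v ∈ M) (a : A) :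
    ⟪u + v, πB a (u + v)⟫_ℂ = ⟪u, πB a u⟫_ℂ + ⟪v, πB a v⟫_ℂ := by
  have huv : ⟪u, πB a v⟫_ℂ = 0 := inner_apply_eq_zero_of_mem_orthogonal hinv hu hv a
  have hvu : ⟪v, πB a u⟫_ℂ = 0 := by
    rw [hstar, inner_eq_zero_symm]
    exact inner_apply_eq_zero_of_mem_orthogonal hinv hu hv (star a)
  rw [map_add, inner_add_left, inner_add_right, inner_add_right, huv, hvu, add_zero, zero_add]

end VectorFunctional

theorem lebesgue_parts_representable_and_sum_general
    (g : A →ₗ[ℂ] ℂ)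
    (πB : A →ₗ[ℂ] (HB →L[ℂ] HB)) (ζB : HB)
    (hmul : ∀ x y : A, πB (x * y) = (πB x).comp (πB y))
    (hstar : ∀ (x : A) (u v : HB), ⟪u, πB x v⟫_ℂ = ⟪πB (star x) u, v⟫_ℂ)
    (hgns : ∀ a : A, g a = ⟪ζB, πB a ζB⟫_ℂ)
    (M : Submodule ℂ HB)
    (hinv : ∀ a : A, ∀ ζ ∈ M, πB a ζ ∈ M)
    (P : HB →L[ℂ] HB) (hP : ∀ ζ : HB, P ζ ∈ M ∧ ζ - P ζ ∈ Mᗮ) :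
    (∃ ga : A →ₗ[ℂ] ℂ, (∀ a : A, ga a = ⟪ζB - P ζB, πB a (ζB - P ζB)⟫_ℂ) ∧
      IsRepresentable ga) ∧
    (∃ gs : A →ₗ[ℂ] ℂ, (∀ a : A, gs a = ⟪P ζB, πB a (P ζB)⟫_ℂ) ∧
      IsRepresentable gs) ∧
    (∀ a : A, g a = ⟪ζB - P ζB, πB a (ζB - P ζB)⟫_ℂ + ⟪P ζB, πB a (P ζB)⟫_ℂ) := by
  refine ⟨⟨_, vectorFunctional_apply πB _, isRepresentable_vectorFunctional hmul hstar _⟩,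
    ⟨_, vectorFunctional_apply πB _, isRepresentable_vectorFunctional hmul hstar _⟩,
    fun a => ?_⟩
  rw [hgns, ← inner_apply_add_of_mem_orthogonal hstar hinv (hP ζB).2 (hP ζB).1, sub_add_cancel]

/-- Let `g` be a representable positive functional with GNS triple `(H_B, π_B, ζ_B)`, `M` a
closed `π_B`-invariant subspace with orthogonal projection `P`. Then
`g_a a = ⟨π_B a (I − P) ζ_B, (I − P) ζ_B⟩` and `g_s a = ⟨π_B a (P ζ_B), P ζ_B⟩` are
representable positive (linear) functionals with `g = g_a + g_s`. -/
theorem lebesgue_parts_representable_and_sum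
    (g : A →ₗ[ℂ] ℂ) (hg : IsRepresentable g)
    (πB : A →ₗ[ℂ] (HB →L[ℂ] HB)) (ζB : HB)
    (hmul : ∀ x y : A, πB (x * y) = (πB x).comp (πB y))
    (hstar : ∀ (x : A) (u v : HB), ⟪u, πB x v⟫_ℂ = ⟪πB (star x) u, v⟫_ℂ)
    (hgns : ∀ a : A, g a = ⟪ζB, πB a ζB⟫_ℂ)
    (hcyc : Dense (Set.range fun a : A => πB a ζB))
    (M : Submodule ℂ HB) (hMclosed : IsClosed (M : Set HB))
    (hinv : ∀ a : A, ∀ ζ ∈ M, πB a ζ ∈ M)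
    (P : HB →L[ℂ] HB) (hP : ∀ ζ : HB, P ζ ∈ M ∧ ζ - P ζ ∈ Mᗮ) :
    (∃ ga : A →ₗ[ℂ] ℂ, (∀ a : A, ga a = ⟪ζB - P ζB, πB a (ζB - P ζB)⟫_ℂ) ∧
      IsRepresentable ga) ∧
    (∃ gs : A →ₗ[ℂ] ℂ, (∀ a : A, gs a = ⟪P ζB, πB a (P ζB)⟫_ℂ) ∧
      IsRepresentable gs) ∧
    (∀ a : A, g a = ⟪ζB - P ζB, πB a (ζB - P ζB)⟫_ℂ + ⟪P ζB, πB a (P ζB)⟫_ℂ) :=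
  lebesgue_parts_representable_and_sum_general g πB ζB hmul hstar hgns M hinv P hP
end

section
/- Let f, g be representable positive functionals on a *-algebra A. If h is a representable positive functional with h ≤ g (i.e., h(a*a) ≤ g(a*a) for all a) and h is f-absolutely continuous, then the Riesz representing vector ζ_h ∈ H_B with h(a) = ⟨Ba, ζ_h⟩ lies in M^⊥, where M = {ζ ∈ H_B : ∃ (a_n), f(a_n*a_n) → 0, Ba_n → ζ}. -/
/-!
Take `aₙ` with `f (aₙ⋆ aₙ) → 0` and `B aₙ → ζ`. Since `⟪B x, B y⟫ = g (x⋆ y)`, the Cauchy property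
of `(B aₙ)` says `g ((aₙ - aₘ)⋆ (aₙ - aₘ)) → 0`, hence the same for `h ≤ g`. Absolute continuity
then gives `h (aₙ⋆ aₙ) → 0`, so `h aₙ → 0` by `|h a|² ≤ C h (a⋆ a)`. Finally
`⟪ζ, ζ_h⟫ = lim ⟪B aₙ, ζ_h⟫ = lim conj (h aₙ) = 0`.
-/

open scoped ComplexOrder InnerProductSpace
open Filter Topology

set_option linter.unusedSectionVars false

theorem Complex.tendsto_zero_of_nonneg_of_le {α : Type*} {l : Filter α} {u v : α → ℂ}
    (hu : ∀ x, 0 ≤ u x) (huv : ∀ x, u x ≤ v x) (hv : Tendsto v l (𝓝 0)) :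
    Tendsto u l (𝓝 0) :=
  squeeze_zero_norm (fun x => CStarAlgebra.norm_le_norm_of_nonneg_of_le (hu x) (huv x))
    (tendsto_zero_iff_norm_tendsto_zero.mp hv)

section GNS

variable {A : Type*} [Ring A] [StarRing A] [Module ℂ A]
  {H : Type*} [NormedAddCommGroup H] [InnerProductSpace ℂ H]

theorem inner_apply_eq_of_gns {g : A →ₗ[ℂ] ℂ} {π : A →ₗ[ℂ] (H →L[ℂ] H)} {ξ : H}
    (hmul : ∀ x y : A, π (x * y) = (π x).comp (π y))
    (hstar : ∀ (x : A) (u v : H), ⟪u, π x v⟫_ℂ = ⟪π (star x) u, v⟫_ℂ)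
    (hgns : ∀ a : A, g a = ⟪ξ, π a ξ⟫_ℂ) (x y : A) :
    ⟪π x ξ, π y ξ⟫_ℂ = g (star x * y) := by
  rw [hgns, hmul, ContinuousLinearMap.comp_apply, hstar (star x) ξ, star_star]

theorem tendsto_star_sub_mul_sub_of_tendsto {ι : Type*} {l : Filter ι} {g : A →ₗ[ℂ] ℂ}
    {π : A →ₗ[ℂ] (H →L[ℂ] H)} {ξ ζ : H}
    (hinner : ∀ x y : A, ⟪π x ξ, π y ξ⟫_ℂ = g (star x * y)) {a : ι → A}
    (ha : Tendsto (fun n => π (a n) ξ) l (𝓝 ζ)) :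
    Tendsto (fun p : ι × ι => g (star (a p.1 - a p.2) * (a p.1 - a p.2))) (l ×ˢ l) (𝓝 0) := by
  have hdiff : Tendsto (fun p : ι × ι => π (a p.1 - a p.2) ξ) (l ×ˢ l) (𝓝 0) := by
    simpa only [map_sub, sub_apply, sub_self, Function.comp_apply] using
      (ha.comp tendsto_fst).sub (ha.comp tendsto_snd)
  simpa only [← hinner, inner_zero_right] using hdiff.inner hdiff

end GNS

theorem tendsto_zero_of_tendsto_star_mul_self {A : Type*} [Mul A] [Star A] {ι : Type*}
    {l : Filter ι} {h : A → ℂ} {C : ℝ} (hC : ∀ a, ‖h a‖ ^ 2 ≤ C * (h (star a * a)).re)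
    {a : ι → A} (ha : Tendsto (fun n => h (star (a n) * a n)) l (𝓝 0)) :
    Tendsto (fun n => h (a n)) l (𝓝 0) := by
  refine squeeze_zero_norm (fun n => Real.le_sqrt_of_sq_le (hC (a n))) ?_
  simpa using ((Complex.continuous_re.tendsto 0).comp ha |>.const_mul C).sqrt

variable {A : Type*} [Ring A] [StarRing A] [Algebra ℂ A] [StarModule ℂ A]
variable {HB : Type*} [NormedAddCommGroup HB] [InnerProductSpace ℂ HB] [CompleteSpace HB]

theorem riesz_vector_mem_orthogonal_general
    (f g : A →ₗ[ℂ] ℂ)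
    (πB : A →ₗ[ℂ] (HB →L[ℂ] HB)) (ζB : HB)
    (hmul : ∀ x y : A, πB (x * y) = (πB x).comp (πB y))
    (hstar : ∀ (x : A) (u v : HB), ⟪u, πB x v⟫_ℂ = ⟪πB (star x) u, v⟫_ℂ)
    (hgns : ∀ a : A, g a = ⟪ζB, πB a ζB⟫_ℂ)
    (h : A →ₗ[ℂ] ℂ) (hh : IsRepresentable h)
    (hle : ∀ a : A, h (star a * a) ≤ g (star a * a))
    (habs : ∀ a : ℕ → A,
      Tendsto (fun n => f (star (a n) * a n)) atTop (nhds 0) →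
      Tendsto (fun p : ℕ × ℕ => h (star (a p.1 - a p.2) * (a p.1 - a p.2)))
        (atTop ×ˢ atTop) (nhds 0) →
      Tendsto (fun n => h (star (a n) * a n)) atTop (nhds 0))
    (ζh : HB) (hζh : ∀ a : A, h a = ⟪ζh, πB a ζB⟫_ℂ) :
    ∀ ζ ∈ lebSet f πB ζB, ⟪ζ, ζh⟫_ℂ = 0 := by
  rintro ζ ⟨a, hfa, hBa⟩
  obtain ⟨hpos, ⟨C, -, hC⟩, -⟩ := hh
  have hg_cauchy := tendsto_star_sub_mul_sub_of_tendsto (inner_apply_eq_of_gns hmul hstar hgns) hBa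
  have hh_cauchy := Complex.tendsto_zero_of_nonneg_of_le (fun _ => hpos _) (fun _ => hle _)
    hg_cauchy
  have hha : Tendsto (fun n => h (a n)) atTop (𝓝 0) :=
    tendsto_zero_of_tendsto_star_mul_self hC (habs a hfa hh_cauchy)
  have hlim : Tendsto (fun n => ⟪πB (a n) ζB, ζh⟫_ℂ) atTop (𝓝 0) := by
    simpa only [Function.comp_def, hζh, inner_conj_symm, map_zero] using
      (Complex.continuous_conj.tendsto 0).comp hha
  exact tendsto_nhds_unique (hBa.inner tendsto_const_nhds) hlim

/-- If `h` is representable, `h ≤ g`, and `h` is `f`-absolutely continuous, then the Riesz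
representing vector `ζ_h ∈ H_B` with `h a = ⟨B a, ζ_h⟩` lies in `Mᗮ`, where
`M = {ζ | ∃ (aₙ), f (aₙ⋆ aₙ) → 0, B aₙ → ζ}` and `B a = π_B a ζ_B`. -/
theorem riesz_vector_mem_orthogonal
    (f g : A →ₗ[ℂ] ℂ) (hf : IsRepresentable f) (hg : IsRepresentable g)
    (πB : A →ₗ[ℂ] (HB →L[ℂ] HB)) (ζB : HB)
    (hmul : ∀ x y : A, πB (x * y) = (πB x).comp (πB y))
    (hstar : ∀ (x : A) (u v : HB), ⟪u, πB x v⟫_ℂ = ⟪πB (star x) u, v⟫_ℂ)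
    (hgns : ∀ a : A, g a = ⟪ζB, πB a ζB⟫_ℂ)
    (hcyc : Dense (Set.range fun a : A => πB a ζB))
    (h : A →ₗ[ℂ] ℂ) (hh : IsRepresentable h)
    (hle : ∀ a : A, h (star a * a) ≤ g (star a * a))
    (habs : ∀ a : ℕ → A,
      Tendsto (fun n => f (star (a n) * a n)) atTop (nhds 0) →
      Tendsto (fun p : ℕ × ℕ => h (star (a p.1 - a p.2) * (a p.1 - a p.2)))
        (atTop ×ˢ atTop) (nhds 0) →
      Tendsto (fun n => h (star (a n) * a n)) atTop (nhds 0))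
    (ζh : HB) (hζh : ∀ a : A, h a = ⟪ζh, πB a ζB⟫_ℂ) :
    ∀ ζ ∈ lebSet f πB ζB, ⟪ζ, ζh⟫_ℂ = 0 :=
  riesz_vector_mem_orthogonal_general f g πB ζB hmul hstar hgns h hh hle habs ζh hζh
end

section
/- Let g be a representable positive functional on a *-algebra A with GNS triple (H_B, π_B, ζ_B), and let h be a representable positive functional with h ≤ g, with Riesz vector ζ_h ∈ H_B satisfying h(a) = ⟨Ba, ζ_h⟩ for all a. Then ‖π_B(a)ζ_h‖² ≤ h(a*a) for every a ∈ A. -/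
open scoped ComplexOrder InnerProductSpace
open Filter Topology

set_option linter.unusedSectionVars false

/-! For `x ∈ A` one has `⟪π_B(a) ζ_h, B x⟫ = h(a⋆ x)`, so the Cauchy–Schwarz inequality for `h`
together with `h ≤ g` gives `‖⟪π_B(a) ζ_h, B x⟫‖² ≤ h(a⋆ a) ‖B x‖²`. The vectors `B x` are dense,
so the same bound holds against every vector, in particular against `π_B(a) ζ_h` itself. -/

variable {A : Type*} [Ring A] [StarRing A] [Algebra ℂ A] [StarModule ℂ A]
variable {HB : Type*} [NormedAddCommGroup HB] [InnerProductSpace ℂ HB] [CompleteSpace HB]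

namespace LinearMap

variable (f : A →ₗ[ℂ] ℂ)

theorem conj_apply_star_mul_of_nonneg (hf : ∀ a : A, 0 ≤ f (star a * a)) (x y : A) :
    starRingEnd ℂ (f (star x * y)) = f (star y * x) := by
  have real (z : A) : starRingEnd ℂ (f (star z * z)) = f (star z * z) :=
    Complex.conj_eq_iff_im.mpr (Complex.nonneg_iff.mp (hf z)).2.symm
  have expand : f (star (x + y) * (x + y))
      = f (star x * x) + f (star x * y) + f (star y * x) + f (star y * y) := by
    simp only [star_add, add_mul, mul_add, map_add]
    ring
  have expand_I : f (star (x + Complex.I • y) * (x + Complex.I • y))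
      = f (star x * x) + Complex.I * f (star x * y) - Complex.I * f (star y * x)
        + f (star y * y) := by
    simp only [star_add, star_smul, Complex.star_def, Complex.conj_I, add_mul, mul_add,
      smul_mul_assoc, mul_smul_comm, map_add, map_smul, neg_smul, map_neg, smul_eq_mul, neg_mul]
    linear_combination (-f (star y * y)) * Complex.I_sq
  have r := real (x + y)
  have r_I := real (x + Complex.I • y)
  rw [expand] at r
  rw [expand_I] at r_I
  simp only [map_add, map_sub, map_mul, Complex.conj_I, real x, real y, neg_mul] at r r_I
  linear_combination r / 2 + Complex.I * r_I / 2 +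
    ((f (star x * y) + starRingEnd ℂ (f (star x * y)) - f (star y * x)
      - starRingEnd ℂ (f (star y * x))) / 2) * Complex.I_sq

theorem norm_apply_star_mul_sq_le (hf : ∀ a : A, 0 ≤ f (star a * a)) (x y : A) :
    ‖f (star x * y)‖ ^ 2 ≤ (f (star x * x)).re * (f (star y * y)).re := by
  let core : PreInnerProductSpace.Core ℂ A :=
    { inner u v := f (star u * v)
      conj_inner_symm u v := f.conj_apply_star_mul_of_nonneg hf v u
      re_inner_nonneg u := (Complex.nonneg_iff.mp (hf u)).1
      add_left u v w := by simp only [star_add, add_mul, map_add]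
      smul_left u v r := by
        simp only [star_smul, smul_mul_assoc, map_smul, smul_eq_mul, Complex.star_def] }
  have cs := InnerProductSpace.Core.inner_mul_inner_self_le (c := core) x y
  change ‖f (star x * y)‖ * ‖f (star y * x)‖ ≤ (f (star x * x)).re * (f (star y * y)).re at cs
  rwa [← f.conj_apply_star_mul_of_nonneg hf x y, RCLike.norm_conj, ← sq] at cs

end LinearMap

theorem norm_sq_le_of_denseRange_of_norm_inner_sq_le {𝕜 E ι : Type*} [RCLike 𝕜]
    [NormedAddCommGroup E] [InnerProductSpace 𝕜 E] {u : ι → E} (hu : DenseRange u) {v : E}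
    {K : ℝ} (hK : 0 ≤ K) (hv : ∀ i, ‖⟪v, u i⟫_𝕜‖ ^ 2 ≤ K * ‖u i‖ ^ 2) : ‖v‖ ^ 2 ≤ K := by
  have bound (w : E) : ‖⟪v, w⟫_𝕜‖ ^ 2 ≤ K * ‖w‖ ^ 2 :=
    hu.induction_on w (isClosed_le (by fun_prop) (by fun_prop)) hv
  have hvv := bound v
  rw [inner_self_eq_norm_sq_to_K, norm_pow, RCLike.norm_ofReal, abs_norm] at hvv
  nlinarith [sq_nonneg ‖v‖]

theorem inner_apply_apply_eq_inner_star_mul (π : A →ₗ[ℂ] (HB →L[ℂ] HB))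
    (hmul : ∀ x y : A, π (x * y) = (π x).comp (π y))
    (hstar : ∀ (x : A) (u v : HB), ⟪u, π x v⟫_ℂ = ⟪π (star x) u, v⟫_ℂ) (a x : A) (ζ η : HB) :
    ⟪π a ζ, π x η⟫_ℂ = ⟪ζ, π (star a * x) η⟫_ℂ := by
  rw [hmul, ContinuousLinearMap.comp_apply, hstar (star a), star_star]

theorem norm_sq_pi_riesz_vector_le_general
    (g : A →ₗ[ℂ] ℂ)
    (πB : A →ₗ[ℂ] (HB →L[ℂ] HB)) (ζB : HB)
    (hmul : ∀ x y : A, πB (x * y) = (πB x).comp (πB y))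
    (hstar : ∀ (x : A) (u v : HB), ⟪u, πB x v⟫_ℂ = ⟪πB (star x) u, v⟫_ℂ)
    (hgns : ∀ a : A, g a = ⟪ζB, πB a ζB⟫_ℂ)
    (hcyc : Dense (Set.range fun a : A => πB a ζB))
    (h : A →ₗ[ℂ] ℂ) (hh : IsRepresentable h)
    (hle : ∀ a : A, h (star a * a) ≤ g (star a * a))
    (ζh : HB) (hζh : ∀ a : A, h a = ⟪ζh, πB a ζB⟫_ℂ) :
    ∀ a : A, ‖πB a ζh‖ ^ 2 ≤ (h (star a * a)).re := by
  intro a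
  have hK : 0 ≤ (h (star a * a)).re := (Complex.nonneg_iff.mp (hh.1 a)).1
  refine norm_sq_le_of_denseRange_of_norm_inner_sq_le (𝕜 := ℂ) hcyc hK fun x => ?_
  have norm_sq_cyclic : ‖πB x ζB‖ ^ 2 = (g (star x * x)).re := by
    rw [← RCLike.re_to_complex, ← inner_self_eq_norm_sq (𝕜 := ℂ),
      inner_apply_apply_eq_inner_star_mul πB hmul hstar, hgns]
  calc ‖⟪πB a ζh, πB x ζB⟫_ℂ‖ ^ 2 = ‖h (star a * x)‖ ^ 2 := by
        rw [inner_apply_apply_eq_inner_star_mul πB hmul hstar, hζh]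
    _ ≤ (h (star a * a)).re * (h (star x * x)).re := h.norm_apply_star_mul_sq_le hh.1 a x
    _ ≤ (h (star a * a)).re * ‖πB x ζB‖ ^ 2 := by
        rw [norm_sq_cyclic]
        exact mul_le_mul_of_nonneg_left (Complex.re_le_re (hle x)) hK

/-- If `h` is a representable positive functional with `h ≤ g`, and `ζ_h ∈ H_B` is its Riesz
vector with `h a = ⟨B a, ζ_h⟩` (`B a = π_B a ζ_B`), then `‖π_B a ζ_h‖² ≤ h (a⋆ a)` for all `a`. -/
theorem norm_sq_pi_riesz_vector_le
    (g : A →ₗ[ℂ] ℂ) (hg : IsRepresentable g)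
    (πB : A →ₗ[ℂ] (HB →L[ℂ] HB)) (ζB : HB)
    (hmul : ∀ x y : A, πB (x * y) = (πB x).comp (πB y))
    (hstar : ∀ (x : A) (u v : HB), ⟪u, πB x v⟫_ℂ = ⟪πB (star x) u, v⟫_ℂ)
    (hgns : ∀ a : A, g a = ⟪ζB, πB a ζB⟫_ℂ)
    (hcyc : Dense (Set.range fun a : A => πB a ζB))
    (h : A →ₗ[ℂ] ℂ) (hh : IsRepresentable h)
    (hle : ∀ a : A, h (star a * a) ≤ g (star a * a))
    (ζh : HB) (hζh : ∀ a : A, h a = ⟪ζh, πB a ζB⟫_ℂ) :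
    ∀ a : A, ‖πB a ζh‖ ^ 2 ≤ (h (star a * a)).re :=
  norm_sq_pi_riesz_vector_le_general g πB ζB hmul hstar hgns hcyc h hh hle ζh hζh
end

section
/- Let f, g be representable positive functionals on a *-algebra A with Lebesgue decomposition g = g_a + g_s. Then g_s and f are mutually singular: if h is a representable positive functional with h ≤ f and h ≤ g_s, then h = 0. Moreover, g_a is maximal: any representable h with h ≤ g and h f-absolutely continuous satisfies h ≤ g_a. -/
/-!
A positive functional `h` gives the seminorm `q(x) = √(h (x⋆ x))`, the norm of the
pre-inner product `(x, y) ↦ h (x⋆ y)`, so `q a ≤ q (a - b) + q b`. Pick `aₙ` with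
`f (aₙ⋆ aₙ) → 0` and `π aₙ ζ → P ζ` and use `b = a aₙ`; then `f (b⋆ b) → 0` by the
representability bound for `f`.

Singularity: `M` is `π`-invariant, hence so is `Mᗮ` and `P` commutes with `π`, so `π aₙ (P ζ) → P ζ`.
With `h ≤ g_s`, `q (a - a aₙ) ≤ ‖π a (P ζ - π aₙ (P ζ))‖ → 0`, and `q (a aₙ) → 0` by `h ≤ f`.
Thus `h` vanishes on every `a⋆ a`, and `|h a|² ≤ C h (a⋆ a)` gives `h = 0`.

Maximality: `a aₙ` is `h`-Cauchy, as `h ≤ g` and `π (a aₙ) ζ` converges, so absolute continuity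
gives `q (a aₙ) → 0`, while `q (a - a aₙ) ≤ ‖π a (ζ - π aₙ ζ)‖ → ‖π a (ζ - P ζ)‖`.
-/

open scoped ComplexOrder InnerProductSpace
open Filter Topology

set_option linter.unusedSectionVars false

variable {A : Type*} [Ring A] [StarRing A] [Algebra ℂ A] [StarModule ℂ A]
variable {HB : Type*} [NormedAddCommGroup HB] [InnerProductSpace ℂ HB] [CompleteSpace HB]

lemma Complex.tendsto_zero_iff_re_of_nonneg {ι : Type*} {l : Filter ι} {u : ι → ℂ}
    (hu : ∀ i, 0 ≤ u i) :
    Tendsto u l (𝓝 0) ↔ Tendsto (fun i => (u i).re) l (𝓝 0) := by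
  have hre : (fun i => (u i).re) = fun i => ‖u i‖ := funext fun i => Complex.re_eq_norm.mpr (hu i)
  rw [hre, tendsto_zero_iff_norm_tendsto_zero]

lemma Submodule.eq_of_sub_mem_orthogonal {𝕜 E : Type*} [RCLike 𝕜] [NormedAddCommGroup E]
    [InnerProductSpace 𝕜 E] {K : Submodule 𝕜 E} {v m m' : E} (hm : m ∈ K) (hm' : m' ∈ K)
    (hv : v - m ∈ Kᗮ) (hv' : v - m' ∈ Kᗮ) : m = m' := by
  refine sub_eq_zero.mp (Submodule.disjoint_def.mp K.orthogonal_disjoint _ (K.sub_mem hm hm') ?_)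
  simpa using Kᗮ.sub_mem hv' hv

section PositiveFunctional

variable {h : A →ₗ[ℂ] ℂ}

lemma map_star_mul_eq_conj_of_nonneg (hpos : ∀ a : A, 0 ≤ h (star a * a)) (x y : A) :
    h (star y * x) = starRingEnd ℂ (h (star x * y)) := by
  have him : ∀ z : A, (h (star z * z)).im = 0 := fun z => (Complex.nonneg_iff.mp (hpos z)).2.symm
  have hadd := him (x + y)
  have hIadd := him (x + Complex.I • y)
  simp only [star_add, mul_add, add_mul, map_add, Complex.add_im, him x, him y, star_smul,
    RCLike.star_def, Complex.conj_I, neg_smul, neg_mul, Algebra.smul_mul_assoc,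
    Algebra.mul_smul_comm, smul_add, smul_neg, map_neg, map_smul, smul_eq_mul, Complex.neg_im,
    Complex.mul_im, Complex.I_re, Complex.I_im, Complex.mul_re, zero_add, add_zero, zero_mul,
    one_mul, mul_zero, sub_self, neg_zero] at hadd hIadd
  apply Complex.ext <;> simp only [Complex.conj_re, Complex.conj_im] <;> linarith

lemma sqrt_re_map_star_mul_self_add_le (hpos : ∀ a : A, 0 ≤ h (star a * a)) (x y : A) :
    √(h (star (x + y) * (x + y))).re ≤ √(h (star x * x)).re + √(h (star y * y)).re := by
  let core : PreInnerProductSpace.Core ℂ A :=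
    { inner x y := h (star x * y)
      conj_inner_symm x y := (map_star_mul_eq_conj_of_nonneg hpos y x).symm
      re_inner_nonneg x := (Complex.nonneg_iff.mp (hpos x)).1
      add_left x y z := by simp only [star_add, add_mul, map_add]
      smul_left x y r := by simp only [star_smul, smul_mul_assoc, map_smul, smul_eq_mul]; rfl }
  let : SeminormedAddCommGroup A := InnerProductSpace.Core.toSeminormedAddCommGroup (𝕜 := ℂ)
  exact norm_add_le x y

lemma re_map_star_mul_self_le_of_tendsto (hpos : ∀ a : A, 0 ≤ h (star a * a))
    {E : Type*} [SeminormedAddCommGroup E] {a : A} {b : ℕ → A} {v : ℕ → E} {L : E}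
    (hv : Tendsto v atTop (𝓝 L))
    (hab : ∀ n, (h (star (a - b n) * (a - b n))).re ≤ ‖v n‖ ^ 2)
    (hb : Tendsto (fun n => (h (star (b n) * b n)).re) atTop (𝓝 0)) :
    (h (star a * a)).re ≤ ‖L‖ ^ 2 := by
  have hbound : ∀ n, √(h (star a * a)).re ≤ ‖v n‖ + √(h (star (b n) * b n)).re := fun n => by
    simpa using (sqrt_re_map_star_mul_self_add_le hpos (a - b n) (b n)).trans
      (add_le_add_left ((Real.sqrt_le_left (norm_nonneg _)).mpr (hab n)) _)
  have hlim : Tendsto (fun n => ‖v n‖ + √(h (star (b n) * b n)).re) atTop (𝓝 (‖L‖ + 0)) :=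
    hv.norm.add (by simpa using hb.sqrt)
  rw [← Real.sqrt_le_left (norm_nonneg _), ← add_zero ‖L‖]
  exact ge_of_tendsto' hlim hbound

lemma eq_zero_of_map_star_mul_self_eq_zero {C : ℝ}
    (hC : ∀ a, ‖h a‖ ^ 2 ≤ C * (h (star a * a)).re) (h0 : ∀ a, h (star a * a) = 0) : h = 0 := by
  ext a
  have := hC a
  rw [h0 a, Complex.zero_re, mul_zero] at this
  simpa using this

lemma tendsto_map_star_mul_mul_left {ι : Type*} {l : Filter ι}
    (hpos : ∀ a : A, 0 ≤ h (star a * a))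
    (hbound : ∀ x : A, ∃ lam : ℝ, 0 ≤ lam ∧
      ∀ b : A, (h (star (x * b) * (x * b))).re ≤ lam * (h (star b * b)).re)
    (x : A) {b : ι → A} (hb : Tendsto (fun i => h (star (b i) * b i)) l (𝓝 0)) :
    Tendsto (fun i => h (star (x * b i) * (x * b i))) l (𝓝 0) := by
  obtain ⟨lam, -, hlam⟩ := hbound x
  rw [Complex.tendsto_zero_iff_re_of_nonneg fun _ => hpos _] at hb ⊢
  exact squeeze_zero (fun i => (Complex.nonneg_iff.mp (hpos _)).1) (fun i => hlam (b i))
    (by simpa using hb.const_mul lam)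

end PositiveFunctional

def LinearMap.AbsolutelyContinuous (h f : A →ₗ[ℂ] ℂ) : Prop :=
  ∀ a : ℕ → A, Tendsto (fun n => f (star (a n) * a n)) atTop (𝓝 0) →
    Tendsto (fun p : ℕ × ℕ => h (star (a p.1 - a p.2) * (a p.1 - a p.2))) (atTop ×ˢ atTop) (𝓝 0) →
    Tendsto (fun n => h (star (a n) * a n)) atTop (𝓝 0)

section Representation

variable {H : Type*} [NormedAddCommGroup H] [InnerProductSpace ℂ H] {π : A →ₗ[ℂ] (H →L[ℂ] H)}
  (hmul : ∀ x y : A, π (x * y) = (π x).comp (π y))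
  (hstar : ∀ (x : A) (u v : H), ⟪u, π x v⟫_ℂ = ⟪π (star x) u, v⟫_ℂ)

section

include hmul

lemma map_sub_mul_apply (a c : A) (w : H) : π (a - a * c) w = π a (w - π c w) := by
  rw [map_sub, hmul, map_sub]; rfl

lemma map_mem_lebSet [CompleteSpace H] {f : A →ₗ[ℂ] ℂ} (hfpos : ∀ a : A, 0 ≤ f (star a * a))
    (hfbound : ∀ x : A, ∃ lam : ℝ, 0 ≤ lam ∧
      ∀ b : A, (f (star (x * b) * (x * b))).re ≤ lam * (f (star b * b)).re)
    {ξ ζ : H} (hζ : ζ ∈ lebSet f π ξ) (x : A) : π x ζ ∈ lebSet f π ξ := by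
  obtain ⟨a, haf, haζ⟩ := hζ
  refine ⟨fun n => x * a n, tendsto_map_star_mul_mul_left hfpos hfbound x haf, ?_⟩
  simpa only [hmul, ContinuousLinearMap.comp_apply, Function.comp_def] using
    ((π x).continuous.tendsto ζ).comp haζ

include hstar

lemma inner_map_star_mul_self_apply (x : A) (w : H) :
    ⟪w, π (star x * x) w⟫_ℂ = ((‖π x w‖ ^ 2 : ℝ) : ℂ) := by
  rw [hmul, ContinuousLinearMap.comp_apply, hstar, star_star, inner_self_eq_norm_sq_to_K]
  push_cast; rfl

end

section Projection

variable {M : Submodule ℂ H} (hM : ∀ (x : A), ∀ ζ ∈ M, π x ζ ∈ M)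
  {P : H →L[ℂ] H} (hP : ∀ ζ : H, P ζ ∈ M ∧ ζ - P ζ ∈ Mᗮ)
include hstar hM

lemma map_mem_orthogonal (x : A) {w : H} (hw : w ∈ Mᗮ) : π x w ∈ Mᗮ := by
  intro u hu
  rw [hstar]
  exact hw _ (hM _ u hu)

include hP

lemma apply_map_apply_eq_map_apply (x : A) (ζ : H) : P (π x ζ) = π x (P ζ) :=
  Submodule.eq_of_sub_mem_orthogonal (hP _).1 (hM x _ (hP ζ).1) (hP _).2
    (by rw [← map_sub]; exact map_mem_orthogonal hstar hM x (hP ζ).2)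

lemma tendsto_map_apply_proj {a : ℕ → A} {ζ : H}
    (ha : Tendsto (fun n => π (a n) ζ) atTop (𝓝 (P ζ))) :
    Tendsto (fun n => π (a n) (P ζ)) atTop (𝓝 (P ζ)) := by
  have hPP : P (P ζ) = P ζ :=
    Submodule.eq_of_sub_mem_orthogonal (hP _).1 (hP ζ).1 (hP _).2 (by simp)
  have hlim := (P.continuous.tendsto _).comp ha
  rw [hPP] at hlim
  simpa only [Function.comp_def, apply_map_apply_eq_map_apply hstar hM hP] using hlim

end Projection

variable {f h : A →ₗ[ℂ] ℂ} (hfpos : ∀ a : A, 0 ≤ f (star a * a))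
  (hfbound : ∀ x : A, ∃ lam : ℝ, 0 ≤ lam ∧
    ∀ b : A, (f (star (x * b) * (x * b))).re ≤ lam * (f (star b * b)).re)
  (hpos : ∀ a : A, 0 ≤ h (star a * a))
include hmul hstar hfpos hfbound hpos

lemma map_star_mul_self_eq_zero_of_le_of_le (hhf : ∀ a, h (star a * a) ≤ f (star a * a))
    {w : H} (hhw : ∀ a, h (star a * a) ≤ ⟪w, π (star a * a) w⟫_ℂ) {a0 : ℕ → A}
    (ha0f : Tendsto (fun n => f (star (a0 n) * a0 n)) atTop (𝓝 0))
    (ha0w : Tendsto (fun n => π (a0 n) w) atTop (𝓝 w)) (a : A) :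
    h (star a * a) = 0 := by
  have hv : Tendsto (fun n => π a (w - π (a0 n) w)) atTop (𝓝 0) := by
    simpa only [sub_self, map_zero, Function.comp_def] using
      ((π a).continuous.tendsto _).comp (ha0w.const_sub w)
  have hb : Tendsto (fun n => (h (star (a * a0 n) * (a * a0 n))).re) atTop (𝓝 0) :=
    squeeze_zero (fun n => (Complex.nonneg_iff.mp (hpos _)).1) (fun n => Complex.re_le_re (hhf _))
      ((Complex.tendsto_zero_iff_re_of_nonneg fun _ => hfpos _).mp
        (tendsto_map_star_mul_mul_left hfpos hfbound a ha0f))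
  have hre := re_map_star_mul_self_le_of_tendsto hpos (b := fun n => a * a0 n) hv (fun n => by
    have := Complex.re_le_re (hhw (a - a * a0 n))
    rwa [inner_map_star_mul_self_apply hmul hstar, Complex.ofReal_re, map_sub_mul_apply hmul] at this)
    hb
  exact le_antisymm
    (Complex.le_def.mpr ⟨by simpa using hre, (Complex.nonneg_iff.mp (hpos a)).2.symm⟩) (hpos a)

lemma map_star_mul_self_le_inner_sub [CompleteSpace H] {ξ : H}
    (hhg : ∀ a, h (star a * a) ≤ ⟪ξ, π (star a * a) ξ⟫_ℂ) (habs : h.AbsolutelyContinuous f)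
    {ζ : H} (hζ : ζ ∈ lebSet f π ξ) (a : A) :
    h (star a * a) ≤ ⟪ξ - ζ, π (star a * a) (ξ - ζ)⟫_ℂ := by
  obtain ⟨a0, ha0f, ha0ζ⟩ := hζ
  have hre_le : ∀ x, (h (star x * x)).re ≤ ‖π x ξ‖ ^ 2 := fun x => by
    simpa only [inner_map_star_mul_self_apply hmul hstar, Complex.ofReal_re] using
      Complex.re_le_re (hhg x)
  have hcauchy : Tendsto (fun p : ℕ × ℕ => (h (star (a * a0 p.1 - a * a0 p.2) *
      (a * a0 p.1 - a * a0 p.2))).re) (atTop ×ˢ atTop) (𝓝 0) := by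
    have hc := (((π a).continuous.tendsto _).comp ha0ζ).cauchySeq
    rw [cauchySeq_iff_tendsto_dist_atTop_0, ← prod_atTop_atTop_eq] at hc
    refine squeeze_zero (fun p => (Complex.nonneg_iff.mp (hpos _)).1) (fun p => ?_)
      (by simpa using hc.pow 2)
    simpa only [map_sub, hmul, sub_apply, ContinuousLinearMap.comp_apply,
      Function.comp_apply, dist_eq_norm] using hre_le (a * a0 p.1 - a * a0 p.2)
  have hb := habs (fun n => a * a0 n) (tendsto_map_star_mul_mul_left hfpos hfbound a ha0f)
    ((Complex.tendsto_zero_iff_re_of_nonneg fun _ => hpos _).mpr hcauchy)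
  have hre := re_map_star_mul_self_le_of_tendsto hpos
    (((π a).continuous.tendsto _).comp (ha0ζ.const_sub ξ)) (fun n => by
      simpa only [map_sub_mul_apply hmul, Function.comp_apply] using hre_le (a - a * a0 n))
    ((Complex.tendsto_zero_iff_re_of_nonneg fun _ => hpos _).mp hb)
  rw [Complex.eq_re_of_ofReal_le (r := 0) (z := h (star a * a)) (by simpa using hpos a),
    inner_map_star_mul_self_apply hmul hstar]
  exact Complex.real_le_real.mpr hre

end Representation

theorem lebesgue_decomposition_singular_and_maximal_general
    (f g : A →ₗ[ℂ] ℂ) (hf : IsRepresentable f)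
    (πB : A →ₗ[ℂ] (HB →L[ℂ] HB)) (ζB : HB)
    (hmul : ∀ x y : A, πB (x * y) = (πB x).comp (πB y))
    (hstar : ∀ (x : A) (u v : HB), ⟪u, πB x v⟫_ℂ = ⟪πB (star x) u, v⟫_ℂ)
    (hgns : ∀ a : A, g a = ⟪ζB, πB a ζB⟫_ℂ)
    (M : Submodule ℂ HB) (hM : (M : Set HB) = lebSet f πB ζB)
    (P : HB →L[ℂ] HB) (hP : ∀ ζ : HB, P ζ ∈ M ∧ ζ - P ζ ∈ Mᗮ) :
    (∀ h : A →ₗ[ℂ] ℂ, IsRepresentable h →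
      (∀ a : A, h (star a * a) ≤ f (star a * a)) →
      (∀ a : A, h (star a * a) ≤ ⟪P ζB, πB (star a * a) (P ζB)⟫_ℂ) →
      h = 0) ∧
    (∀ h : A →ₗ[ℂ] ℂ, IsRepresentable h →
      (∀ a : A, h (star a * a) ≤ g (star a * a)) →
      (∀ a : ℕ → A,
        Tendsto (fun n => f (star (a n) * a n)) atTop (nhds 0) →
        Tendsto (fun p : ℕ × ℕ => h (star (a p.1 - a p.2) * (a p.1 - a p.2)))
          (atTop ×ˢ atTop) (nhds 0) →
        Tendsto (fun n => h (star (a n) * a n)) atTop (nhds 0)) →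
      (∀ a : A, h (star a * a) ≤ ⟪ζB - P ζB, πB (star a * a) (ζB - P ζB)⟫_ℂ)) := by
  obtain ⟨hfpos, -, hfbound⟩ := hf
  have hMinv : ∀ x : A, ∀ ζ ∈ M, πB x ζ ∈ M := fun x ζ hζ => by
    rw [← SetLike.mem_coe, hM] at hζ ⊢
    exact map_mem_lebSet hmul hfpos hfbound hζ x
  have hPζB : P ζB ∈ lebSet f πB ζB := by
    rw [← hM]
    exact (hP ζB).1
  have ⟨a0, ha0f, ha0P⟩ := hPζB
  refine ⟨fun h ⟨hpos, ⟨C, _, hC⟩, _⟩ hhf hhs => ?_, fun h ⟨hpos, _⟩ hhg habs => ?_⟩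
  · exact eq_zero_of_map_star_mul_self_eq_zero hC
      (map_star_mul_self_eq_zero_of_le_of_le hmul hstar hfpos hfbound hpos hhf hhs ha0f
        (tendsto_map_apply_proj hstar hMinv hP ha0P))
  · exact map_star_mul_self_le_inner_sub hmul hstar hfpos hfbound hpos
      (fun a => hgns (star a * a) ▸ hhg a) habs hPζB

/-- **Lebesgue decomposition theorem** (singularity and maximality). With
`g_a a = ⟨π_B a (I − P) ζ_B, (I − P) ζ_B⟩` and `g_s a = ⟨π_B a (P ζ_B), P ζ_B⟩`:
(1) `g_s ⟂ f`: any representable `h` with `h ≤ f` and `h ≤ g_s` is zero;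
(2) `g_a` is maximal: any representable `h` with `h ≤ g` that is `f`-absolutely continuous
satisfies `h ≤ g_a`. -/
theorem lebesgue_decomposition_singular_and_maximal
    (f g : A →ₗ[ℂ] ℂ) (hf : IsRepresentable f) (hg : IsRepresentable g)
    (πB : A →ₗ[ℂ] (HB →L[ℂ] HB)) (ζB : HB)
    (hmul : ∀ x y : A, πB (x * y) = (πB x).comp (πB y))
    (hstar : ∀ (x : A) (u v : HB), ⟪u, πB x v⟫_ℂ = ⟪πB (star x) u, v⟫_ℂ)
    (hgns : ∀ a : A, g a = ⟪ζB, πB a ζB⟫_ℂ)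
    (hcyc : Dense (Set.range fun a : A => πB a ζB))
    (M : Submodule ℂ HB) (hM : (M : Set HB) = lebSet f πB ζB)
    (P : HB →L[ℂ] HB) (hP : ∀ ζ : HB, P ζ ∈ M ∧ ζ - P ζ ∈ Mᗮ) :
    (∀ h : A →ₗ[ℂ] ℂ, IsRepresentable h →
      (∀ a : A, h (star a * a) ≤ f (star a * a)) →
      (∀ a : A, h (star a * a) ≤ ⟪P ζB, πB (star a * a) (P ζB)⟫_ℂ) →
      h = 0) ∧
    (∀ h : A →ₗ[ℂ] ℂ, IsRepresentable h →
      (∀ a : A, h (star a * a) ≤ g (star a * a)) →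
      (∀ a : ℕ → A,
        Tendsto (fun n => f (star (a n) * a n)) atTop (nhds 0) →
        Tendsto (fun p : ℕ × ℕ => h (star (a p.1 - a p.2) * (a p.1 - a p.2)))
          (atTop ×ˢ atTop) (nhds 0) →
        Tendsto (fun n => h (star (a n) * a n)) atTop (nhds 0)) →
      (∀ a : A, h (star a * a) ≤ ⟪ζB - P ζB, πB (star a * a) (ζB - P ζB)⟫_ℂ)) :=
  lebesgue_decomposition_singular_and_maximal_general f g hf πB ζB hmul hstar hgns M hM P hP
end
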